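/- arXiv:1109.1963 — 3 statements merged into one kernel-verified Lean document; each statement's English description precedes it below -/
import Mathlib

section
/- Every velocity lies in the velocity polytope: let (G, δ) be a displacement graph in dimension d. If f is a trajectory whose velocity u = lim_{n→∞} (1/n)·∑_{k=1}^n δ(f(k)) exists in ℝ^d, then u lies in the convex hull in ℝ^d of the set of basic velocities of (G, δ). -/
/-- A path in a directed multigraph with source map `s` and target map `t`:
a nonempty list of edges `e₁ … e_n` with `t eᵢ = s eᵢ₊₁`. -/
def IsPathList {V E : Type*} (s t : E → V) (p : List E) : Prop :=
  p ≠ [] ∧ p.Chain' (fun e f => t e = s f)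

/-- A cycle: a path `e₁ … e_n` with `s e₁ = t e_n` whose vertices
`s e₁, …, s e_n` are pairwise distinct. -/
def IsCycleList {V E : Type*} (s t : E → V) (p : List E) : Prop :=
  ∃ h : p ≠ [], p.Chain' (fun e f => t e = s f) ∧
    s (p.head h) = t (p.getLast h) ∧ (p.map s).Nodup

/-- Regard a vector of `ℤ^d` as a point of Euclidean space `ℝ^d`. -/
def toR {d : ℕ} (x : Fin d → ℤ) : EuclideanSpace ℝ (Fin d) := WithLp.toLp 2 (fun i => (x i : ℝ))

/-- A trajectory: a sequence of edges with `s (f (n+1)) = t (f n)`. -/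
def IsTrajectory {V E : Type*} (s t : E → V) (f : ℕ → E) : Prop :=
  ∀ n : ℕ, s (f (n + 1)) = t (f n)

/-- `u` is the velocity of the trajectory `f`:
`(1/n) · ∑_{k=1}^n δ(f k) → u` as `n → ∞`. -/
def HasVelocity {d : ℕ} {E : Type*} (δ : E → Fin d → ℤ) (f : ℕ → E)
    (u : EuclideanSpace ℝ (Fin d)) : Prop :=
  Filter.Tendsto (fun n : ℕ => (n : ℝ)⁻¹ • ∑ k ∈ Finset.Icc 1 n, toR (δ (f k)))
    Filter.atTop (nhds u)

/-- The set of basic velocities `δ(c)/|c|` of cycles `c`. -/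
def basicVelocities {d : ℕ} {V E : Type*} (s t : E → V) (δ : E → Fin d → ℤ) :
    Set (EuclideanSpace ℝ (Fin d)) :=
  {u | ∃ c : List E, IsCycleList s t c ∧ u = (c.length : ℝ)⁻¹ • toR (c.map δ).sum}

/-- The set of all velocities of trajectories. -/
def velocitySet {d : ℕ} {V E : Type*} (s t : E → V) (δ : E → Fin d → ℤ) :
    Set (EuclideanSpace ℝ (Fin d)) :=
  {u | ∃ f : ℕ → E, IsTrajectory s t f ∧ HasVelocity δ f u}

/-- `p` is a path from vertex `a` to vertex `b`. -/
def PathFrom {V E : Type*} (s t : E → V) (a b : V) (p : List E) : Prop :=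
  ∃ h : p ≠ [], p.Chain' (fun e f => t e = s f) ∧ s (p.head h) = a ∧ t (p.getLast h) = b

/-- Strong connectivity: any vertex can be reached from any vertex by a path. -/
def StronglyConnected {V E : Type*} (s t : E → V) : Prop :=
  ∀ v w : V, ∃ p : List E, PathFrom s t v w p

/-!
Cut the first `n` edges of the trajectory into cycles, each time a vertex repeats, until a simple
path of at most `|V|` edges is left. The total displacement of the cycles divided by their total
length is a convex combination of basic velocities, and it is within `O(|V| / n)` of the average
displacement of the first `n` edges. So `u` lies in the closure of the convex hull of the finitely
many basic velocities, which is closed.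
-/

theorem Convex.inv_sum_smul_sum_mem {ι F : Type*} [AddCommGroup F] [Module ℝ F] {K : Set F}
    (hK : Convex ℝ K) {l : List ι} (hl : l ≠ []) {w : ι → ℝ} {z : ι → F}
    (hw : ∀ i ∈ l, 0 < w i) (hz : ∀ i ∈ l, (w i)⁻¹ • z i ∈ K) :
    ((l.map w).sum)⁻¹ • (l.map z).sum ∈ K := by
  induction l with
  | nil => exact absurd rfl hl
  | cons i l ih =>
    obtain ⟨hwi, hw⟩ := List.forall_mem_cons.1 hw
    obtain ⟨hzi, hz⟩ := List.forall_mem_cons.1 hz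
    rcases eq_or_ne l [] with rfl | hl'
    · simpa using hzi
    have hW : 0 < (l.map w).sum := List.sum_pos _ (by simpa using hw) (by simpa)
    have hmem := hK hzi (ih hl' hw hz) (div_nonneg hwi.le (add_pos hwi hW).le)
      (div_nonneg hW.le (add_pos hwi hW).le) (by field_simp)
    convert hmem using 1
    simp only [List.map_cons, List.sum_cons, smul_smul, smul_add]
    congr 2 <;> field_simp

theorem norm_sum_map_le_length_mul {α F : Type*} [SeminormedAddCommGroup F] {g : α → F} {M : ℝ}
    (hg : ∀ a, ‖g a‖ ≤ M) (l : List α) : ‖(l.map g).sum‖ ≤ l.length * M := by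
  induction l with
  | nil => simp
  | cons a l ih =>
    rw [List.map_cons, List.sum_cons, List.length_cons, Nat.cast_succ]
    linarith [norm_add_le (g a) (l.map g).sum, hg a]

theorem norm_inv_smul_add_sub_inv_smul_le {F : Type*} [SeminormedAddCommGroup F]
    [NormedSpace ℝ F] {A B : F} {L q M : ℝ} (hL : 0 < L) (hq : 0 ≤ q)
    (hA : ‖A‖ ≤ L * M) (hB : ‖B‖ ≤ q * M) :
    ‖(L + q)⁻¹ • (A + B) - L⁻¹ • A‖ ≤ 2 * q * M / (L + q) := by
  have hLq : 0 < L + q := by linarith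
  have hcoef : (L + q)⁻¹ - L⁻¹ = -((L + q)⁻¹ * (q / L)) := by field_simp; ring
  have hsplit : (L + q)⁻¹ • (A + B) - L⁻¹ • A = (L + q)⁻¹ • (B - (q / L) • A) := by
    linear_combination (norm := module) hcoef • A
  have hqA : q / L * ‖A‖ ≤ q * M := by
    calc q / L * ‖A‖ ≤ q / L * (L * M) := by gcongr
      _ = q * M := by field_simp
  rw [hsplit, norm_smul, Real.norm_of_nonneg (inv_nonneg.2 hLq.le), inv_mul_eq_div]
  gcongr
  calc ‖B - (q / L) • A‖ ≤ ‖B‖ + ‖(q / L) • A‖ := norm_sub_le _ _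
    _ = ‖B‖ + q / L * ‖A‖ := by rw [norm_smul, Real.norm_of_nonneg (div_nonneg hq hL.le)]
    _ ≤ 2 * q * M := by linarith

theorem mem_closure_of_tendsto_of_eventually_dist_le {ι X : Type*} [PseudoMetricSpace X]
    {l : Filter ι} [l.NeBot] {x : ι → X} {u : X} {K : Set X} {r : ι → ℝ}
    (hx : Filter.Tendsto x l (nhds u)) (hr : Filter.Tendsto r l (nhds 0))
    (hK : ∀ᶠ i in l, ∃ y ∈ K, dist (x i) y ≤ r i) : u ∈ closure K := by
  refine Metric.mem_closure_iff.2 fun ε hε => ?_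
  obtain ⟨i, ⟨y, hyK, hy⟩, hxi, hri⟩ :=
    (hK.and ((Metric.tendsto_nhds.1 hx (ε / 2) (half_pos hε)).and
      (hr.eventually (gt_mem_nhds (half_pos hε))))).exists
  exact ⟨y, hyK, by linarith [dist_triangle_left u y (x i)]⟩

section CycleDecomposition

variable {V E : Type*} (s t : E → V)

theorem exists_cycles_perm_append_nodup {p : List E} (hp : p.IsChain (fun e f => t e = s f)) :
    ∃ (cs : List (List E)) (q : List E), (∀ c ∈ cs, IsCycleList s t c) ∧
      q.IsChain (fun e f => t e = s f) ∧ (q.map s).Nodup ∧ (q.map s).head? = (p.map s).head? ∧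
      p.Perm (cs.flatten ++ q) := by
  induction p with
  | nil => exact ⟨[], [], by simp, .nil, .nil, rfl, .nil⟩
  | cons e p ih =>
    obtain ⟨hep, hp⟩ := List.isChain_cons.1 hp
    obtain ⟨cs, q, hcs, hq, hqs, hhead, hperm⟩ := ih hp
    have heq : (e :: q).IsChain (fun e f => t e = s f) := by
      refine List.isChain_cons.2 ⟨fun y hy => ?_, hq⟩
      obtain ⟨z, hz, hzy⟩ : ∃ z ∈ p.head?, s z = s y := by
        rw [List.head?_map, List.head?_map, Option.mem_def.1 hy] at hhead
        simpa using hhead.symm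
      exact (hep z hz).trans hzy
    by_cases hes : s e ∈ q.map s
    -- `q` revisits `s e` at `x`, so `e` followed by the part of `q` before `x` is a cycle.
    · obtain ⟨x, hx, hxe⟩ := List.mem_map.1 hes
      obtain ⟨A, B, rfl⟩ := List.append_of_mem hx
      rw [List.map_append, List.map_cons] at hqs
      have hAe : s e ∉ A.map s := fun h =>
        List.disjoint_of_nodup_append hqs h (hxe ▸ List.mem_cons_self)
      have hcyc : IsCycleList s t (e :: A) := by
        have hchain : ((e :: A) ++ x :: B).IsChain (fun e f => t e = s f) := heq
        refine ⟨List.cons_ne_nil _ _, hchain.prefix (List.prefix_append _ _), ?_,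
          List.nodup_cons.2 ⟨hAe, hqs.of_append_left⟩⟩
        rw [List.head_cons, ← hxe]
        exact (List.isChain_append.1 hchain).2.2 _ (List.getLast_mem_getLast? _) _ rfl |>.symm
      refine ⟨(e :: A) :: cs, x :: B, List.forall_mem_cons.2 ⟨hcyc, hcs⟩, hq.suffix ⟨A, rfl⟩,
        hqs.of_append_right, by simp [hxe], ?_⟩
      simpa using (hperm.trans (List.perm_append_comm_assoc _ _ _)).cons e
    · exact ⟨cs, e :: q, hcs, heq, List.nodup_cons.2 ⟨hes, hqs⟩, rfl,
        (hperm.cons e).trans List.perm_middle.symm⟩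

end CycleDecomposition

theorem toR_list_sum {d : ℕ} (l : List (Fin d → ℤ)) : toR l.sum = (l.map toR).sum := by
  induction l with
  | nil => ext; simp [toR]
  | cons x l ih => ext; simp [toR, ← ih]

section BasicVelocities

variable {d : ℕ} {V E : Type*} (s t : E → V) (δ : E → Fin d → ℤ)

theorem finite_basicVelocities [Fintype V] [Finite E] : (basicVelocities s t δ).Finite := by
  refine ((List.finite_length_le E (Fintype.card V)).image
    fun c => (c.length : ℝ)⁻¹ • toR (c.map δ).sum).subset ?_
  rintro u ⟨c, ⟨-, -, -, hc⟩, rfl⟩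
  exact ⟨c, by simpa using hc.length_le_card, rfl⟩

theorem inv_length_smul_mem_convexHull_basicVelocities {cs : List (List E)}
    (hcs : ∀ c ∈ cs, IsCycleList s t c) (hne : cs.flatten ≠ []) :
    (cs.flatten.length : ℝ)⁻¹ • (cs.flatten.map fun e => toR (δ e)).sum ∈
      convexHull ℝ (basicVelocities s t δ) := by
  have h := (convex_convexHull ℝ (basicVelocities s t δ)).inv_sum_smul_sum_mem
    (l := cs) (w := fun c => (c.length : ℝ)) (z := fun c => toR (c.map δ).sum)
    (by rintro rfl; exact hne rfl)
    (fun c hc => by obtain ⟨hc, -⟩ := hcs c hc; exact_mod_cast List.length_pos_of_ne_nil hc)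
    (fun c hc => subset_convexHull ℝ _ ⟨c, hcs c hc, rfl⟩)
  simpa [List.length_flatten, List.map_flatten, List.sum_flatten, toR_list_sum,
    Function.comp_def] using h

theorem exists_mem_convexHull_basicVelocities_dist_le [Fintype V] {M : ℝ}
    (hM : ∀ e, ‖toR (δ e)‖ ≤ M) {p : List E} (hp : p.IsChain (fun e f => t e = s f))
    (hlen : Fintype.card V < p.length) :
    ∃ y ∈ convexHull ℝ (basicVelocities s t δ),
      dist ((p.length : ℝ)⁻¹ • (p.map fun e => toR (δ e)).sum) y ≤
        2 * Fintype.card V * M / p.length := by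
  obtain ⟨cs, q, hcs, -, hqs, -, hperm⟩ := exists_cycles_perm_append_nodup s t hp
  have hq : q.length ≤ Fintype.card V := by simpa using hqs.length_le_card
  have hplen : p.length = cs.flatten.length + q.length := by simpa using hperm.length_eq
  have hM0 : 0 ≤ M := (norm_nonneg _).trans (hM (p.head (List.ne_nil_of_length_pos (by omega))))
  refine ⟨_, inv_length_smul_mem_convexHull_basicVelocities s t δ hcs
    (List.ne_nil_of_length_pos (by omega)), ?_⟩
  rw [dist_eq_norm, (hperm.map _).sum_eq, List.map_append, List.sum_append, hplen, Nat.cast_add]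
  calc _ ≤ 2 * q.length * M / (cs.flatten.length + q.length) :=
        norm_inv_smul_add_sub_inv_smul_le (by norm_cast; omega) (by positivity)
          (norm_sum_map_le_length_mul hM _) (norm_sum_map_le_length_mul hM _)
    _ ≤ _ := by gcongr

end BasicVelocities

theorem IsTrajectory.isChain_map_range' {V E : Type*} {s t : E → V} {f : ℕ → E}
    (hf : IsTrajectory s t f) (a n : ℕ) :
    ((List.range' a n).map f).IsChain (fun e e' => t e = s e') :=
  (List.isChain_map f).2 <|
    (List.isChain_range' a n 1).imp fun i j (h : j = i + 1) => h ▸ (hf i).symm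

theorem Finset.sum_Icc_one_eq_sum_map_range' {M : Type*} [AddCommMonoid M] (g : ℕ → M) (n : ℕ) :
    ∑ k ∈ Finset.Icc 1 n, g k = ((List.range' 1 n).map g).sum := by
  rw [Nat.Icc_eq_range']; simp [Finset.sum]

theorem stmt9_general {d : ℕ} {V E : Type*} [Fintype V] [Fintype E]
    (s t : E → V) (δ : E → Fin d → ℤ)
    (f : ℕ → E) (hf : IsTrajectory s t f)
    (u : EuclideanSpace ℝ (Fin d)) (hu : HasVelocity δ f u) :
    u ∈ convexHull ℝ (basicVelocities s t δ) := by
  obtain ⟨M, hM⟩ := (Set.finite_range fun e => ‖toR (δ e)‖).bddAbove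
  rw [← ((finite_basicVelocities s t δ).isClosed_convexHull ℝ).closure_eq]
  refine mem_closure_of_tendsto_of_eventually_dist_le hu
    (tendsto_const_div_atTop_nhds_zero_nat (2 * Fintype.card V * M)) ?_
  filter_upwards [Filter.eventually_gt_atTop (Fintype.card V)] with n hn
  simpa [Finset.sum_Icc_one_eq_sum_map_range', Function.comp_def] using
    exists_mem_convexHull_basicVelocities_dist_le s t δ (fun e => hM ⟨e, rfl⟩)
      (hf.isChain_map_range' 1 n) (by simpa using hn)

/-- Every velocity lies in the velocity polytope: if a trajectory `f` has
velocity `u`, then `u` lies in the convex hull of the basic velocities. -/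
theorem stmt9 {d : ℕ} (hd : 1 ≤ d) {V E : Type*} [Fintype V] [Nonempty V] [Fintype E]
    (s t : E → V) (δ : E → Fin d → ℤ)
    (f : ℕ → E) (hf : IsTrajectory s t f)
    (u : EuclideanSpace ℝ (Fin d)) (hu : HasVelocity δ f u) :
    u ∈ convexHull ℝ (basicVelocities s t δ) :=
  stmt9_general s t δ f hf u hu
end

section
/- Existence of the large-scale norm: let (G, δ) be a displacement graph in dimension d, let G̃ be its associated periodic graph, and suppose G̃ is strongly connected. Let D(a, b) ∈ ℕ denote the length of a shortest path in G̃ from vertex a to vertex b (with D(a, a) = 0). Then for every x ∈ ℤ^d and every vertex a of G̃, the limit lim_{n→∞} D(a, a + n·x)/n exists in ℝ, and its value does not depend on the choice of vertex a. -/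
/-- Source map of the periodic graph `G̃` associated to a displacement graph. -/
def sTil {d : ℕ} {V E : Type*} (s : E → V) (_δ : E → Fin d → ℤ) :
    E × (Fin d → ℤ) → V × (Fin d → ℤ) :=
  fun e => (s e.1, e.2)

/-- Target map of the periodic graph `G̃` associated to a displacement graph. -/
def tTil {d : ℕ} {V E : Type*} (t : E → V) (δ : E → Fin d → ℤ) :
    E × (Fin d → ℤ) → V × (Fin d → ℤ) :=
  fun e => (t e.1, e.2 + δ e.1)

/-- Length of a shortest path from `a` to `b` (with `graphDist a a = 0`). -/
noncomputable def graphDist {V E : Type*} (s t : E → V) (a b : V) : ℕ :=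
  sInf {n : ℕ | (a = b ∧ n = 0) ∨ ∃ p : List E, PathFrom s t a b p ∧ p.length = n}


/-!
Translations of `ℤ^d` are automorphisms of `G̃`, so `D` is translation invariant. Hence
`n ↦ D(a, a + n·x)` is subadditive (go to `a + m·x` first, then translate the optimal path
from `a` to `a + n·x`), and Fekete's lemma gives the limit of `D(a, a + n·x)/n`. Moving from `a`
to another vertex `b` and back costs `D(a, b) + D(b, a)` at both ends, independently of `n`,
so the limit does not depend on `a`.
-/

open Filter Topology

section PathFrom

variable {V E : Type*} {s t : E → V}

theorem PathFrom.append {a b c : V} {p q : List E}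
    (hp : PathFrom s t a b p) (hq : PathFrom s t b c q) : PathFrom s t a c (p ++ q) := by
  obtain ⟨hpne, hpc, hph, hpl⟩ := hp
  obtain ⟨hqne, hqc, hqh, hql⟩ := hq
  refine ⟨by simp [hpne], ?_, by rwa [List.head_append_left hpne], ?_⟩
  · refine List.isChain_append.2 ⟨hpc, hqc, fun e he f hf => ?_⟩
    rw [List.getLast?_eq_some_getLast hpne, Option.mem_some_iff] at he
    rw [List.head?_eq_some_head hqne, Option.mem_some_iff] at hf
    rw [← he, ← hf, hpl, hqh]
  · rwa [List.getLast_append_of_right_ne_nil p q hqne]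

theorem PathFrom.map {V' E' : Type*} {s' t' : E' → V'} (φ : V → V') (ψ : E → E')
    (hs : ∀ e, s' (ψ e) = φ (s e)) (ht : ∀ e, t' (ψ e) = φ (t e))
    {a b : V} {p : List E} (hp : PathFrom s t a b p) :
    PathFrom s' t' (φ a) (φ b) (p.map ψ) := by
  obtain ⟨hne, hchain, hhead, hlast⟩ := hp
  refine ⟨by simpa using hne, ?_, by rw [List.head_map, hs, hhead],
    by rw [List.getLast_map, ht, hlast]⟩
  exact (List.isChain_map ψ).2 (List.IsChain.imp (fun e f h => by rw [ht, hs, h]) hchain)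

theorem graphDist_le_length {a b : V} {p : List E} (hp : PathFrom s t a b p) :
    graphDist s t a b ≤ p.length :=
  Nat.sInf_le (Or.inr ⟨p, hp, rfl⟩)

@[simp]
theorem graphDist_self (a : V) : graphDist s t a a = 0 :=
  Nat.le_zero.mp (Nat.sInf_le (Or.inl ⟨rfl, rfl⟩))

variable (hconn : ∀ a b : V, a ≠ b → ∃ p : List E, PathFrom s t a b p)
include hconn

theorem exists_pathFrom_length_eq_graphDist {a b : V} (hab : a ≠ b) :
    ∃ p : List E, PathFrom s t a b p ∧ p.length = graphDist s t a b := by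
  obtain ⟨p, hp⟩ := hconn a b hab
  have := Nat.sInf_mem (s := {n : ℕ | (a = b ∧ n = 0) ∨
    ∃ p : List E, PathFrom s t a b p ∧ p.length = n}) ⟨p.length, Or.inr ⟨p, hp, rfl⟩⟩
  exact this.resolve_left fun h => hab h.1

theorem graphDist_triangle (a b c : V) :
    graphDist s t a c ≤ graphDist s t a b + graphDist s t b c := by
  rcases eq_or_ne a b with rfl | hab
  · simp
  rcases eq_or_ne b c with rfl | hbc
  · simp
  obtain ⟨p, hp, hplen⟩ := exists_pathFrom_length_eq_graphDist hconn hab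
  obtain ⟨q, hq, hqlen⟩ := exists_pathFrom_length_eq_graphDist hconn hbc
  rw [← hplen, ← hqlen, ← List.length_append]
  exact graphDist_le_length (hp.append hq)

theorem graphDist_map_le {V' E' : Type*} {s' t' : E' → V'} (φ : V → V') (ψ : E → E')
    (hs : ∀ e, s' (ψ e) = φ (s e)) (ht : ∀ e, t' (ψ e) = φ (t e)) (a b : V) :
    graphDist s' t' (φ a) (φ b) ≤ graphDist s t a b := by
  rcases eq_or_ne a b with rfl | hab
  · simp
  obtain ⟨p, hp, hplen⟩ := exists_pathFrom_length_eq_graphDist hconn hab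
  rw [← hplen, ← List.length_map ψ]
  exact graphDist_le_length (hp.map φ ψ hs ht)

end PathFrom

section Periodic

variable {d : ℕ} {V E : Type*} {s t : E → V} {δ : E → Fin d → ℤ}
  (hconn : ∀ a b : V × (Fin d → ℤ), a ≠ b →
    ∃ p : List (E × (Fin d → ℤ)), PathFrom (sTil s δ) (tTil t δ) a b p)
include hconn

theorem graphDist_translate_le (z : Fin d → ℤ) (a b : V × (Fin d → ℤ)) :
    graphDist (sTil s δ) (tTil t δ) (a.1, a.2 + z) (b.1, b.2 + z) ≤
      graphDist (sTil s δ) (tTil t δ) a b :=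
  graphDist_map_le hconn (fun a => (a.1, a.2 + z)) (fun e => (e.1, e.2 + z))
    (fun _ => rfl) (fun e => by simp only [tTil, add_right_comm]) a b

theorem graphDist_translate (z : Fin d → ℤ) (a b : V × (Fin d → ℤ)) :
    graphDist (sTil s δ) (tTil t δ) (a.1, a.2 + z) (b.1, b.2 + z) =
      graphDist (sTil s δ) (tTil t δ) a b := by
  refine (graphDist_translate_le hconn z a b).antisymm ?_
  simpa using graphDist_translate_le hconn (-z) (a.1, a.2 + z) (b.1, b.2 + z)

theorem subadditive_graphDist_orbit (x : Fin d → ℤ) (a : V × (Fin d → ℤ)) :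
    Subadditive fun n : ℕ => (graphDist (sTil s δ) (tTil t δ) a (a.1, a.2 + n • x) : ℝ) := by
  intro m n
  have hshift : graphDist (sTil s δ) (tTil t δ) (a.1, a.2 + m • x) (a.1, a.2 + (m + n) • x) =
      graphDist (sTil s δ) (tTil t δ) a (a.1, a.2 + n • x) := by
    rw [← graphDist_translate hconn (m • x) a, add_nsmul, add_right_comm, add_assoc]
  have htri := graphDist_triangle hconn a (a.1, a.2 + m • x) (a.1, a.2 + (m + n) • x)
  rw [hshift] at htri
  dsimp only
  exact_mod_cast htri

theorem graphDist_orbit_le (x : Fin d → ℤ) (a b : V × (Fin d → ℤ)) (n : ℕ) :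
    graphDist (sTil s δ) (tTil t δ) a (a.1, a.2 + n • x) ≤
      graphDist (sTil s δ) (tTil t δ) a b + graphDist (sTil s δ) (tTil t δ) b (b.1, b.2 + n • x) +
        graphDist (sTil s δ) (tTil t δ) b a := by
  rw [← graphDist_translate hconn (n • x) b a]
  exact (graphDist_triangle hconn _ _ _).trans
    (Nat.add_le_add_right (graphDist_triangle hconn _ b _) _)

end Periodic

theorem Filter.Tendsto.div_natCast_of_abs_sub_le {u w : ℕ → ℝ} {L : ℝ} (C : ℝ)
    (hu : Tendsto (fun n : ℕ => u n / n) atTop (𝓝 L)) (h : ∀ n, |w n - u n| ≤ C) :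
    Tendsto (fun n : ℕ => w n / n) atTop (𝓝 L) := by
  have hdiff : Tendsto (fun n : ℕ => (w n - u n) / n) atTop (𝓝 0) := by
    refine squeeze_zero_norm (fun n => ?_) (tendsto_const_div_atTop_nhds_zero_nat C)
    rw [Real.norm_eq_abs, abs_div, Nat.abs_cast]
    gcongr
    exact h n
  simpa [← add_div] using hu.add hdiff

theorem stmt13_general {d : ℕ} {V E : Type*} [Nonempty V]
    (s t : E → V) (δ : E → Fin d → ℤ)
    (hconn : ∀ a b : V × (Fin d → ℤ), a ≠ b →
      ∃ p : List (E × (Fin d → ℤ)), PathFrom (sTil s δ) (tTil t δ) a b p)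
    (x : Fin d → ℤ) :
    ∃ L : ℝ, ∀ a : V × (Fin d → ℤ),
      Filter.Tendsto
        (fun n : ℕ => (graphDist (sTil s δ) (tTil t δ) a (a.1, a.2 + n • x) : ℝ) / n)
        Filter.atTop (nhds L) := by
  set D := graphDist (sTil s δ) (tTil t δ)
  obtain ⟨v₀⟩ := ‹Nonempty V›
  let b : V × (Fin d → ℤ) := (v₀, 0)
  have hsub := subadditive_graphDist_orbit hconn x b
  have hb := hsub.tendsto_lim ⟨0, by rintro _ ⟨n, rfl⟩; positivity⟩
  refine ⟨hsub.lim, fun a => hb.div_natCast_of_abs_sub_le (D a b + D b a) fun n => ?_⟩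
  have hab : (D a (a.1, a.2 + n • x) : ℝ) ≤ D a b + D b (b.1, b.2 + n • x) + D b a := by
    exact_mod_cast graphDist_orbit_le hconn x a b n
  have hba : (D b (b.1, b.2 + n • x) : ℝ) ≤ D b a + D a (a.1, a.2 + n • x) + D a b := by
    exact_mod_cast graphDist_orbit_le hconn x b a n
  rw [abs_sub_le_iff]
  constructor <;> linarith

/-- Existence of the large-scale norm: if the periodic graph `G̃` associated to
`(G, δ)` is strongly connected, then for every `x ∈ ℤ^d` the limit
`lim_{n→∞} D(a, a + n·x)/n` exists and does not depend on the vertex `a`. -/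
theorem stmt13 {d : ℕ} (hd : 1 ≤ d) {V E : Type*} [Fintype V] [Nonempty V] [Fintype E]
    (s t : E → V) (δ : E → Fin d → ℤ)
    (hconn : ∀ a b : V × (Fin d → ℤ), a ≠ b →
      ∃ p : List (E × (Fin d → ℤ)), PathFrom (sTil s δ) (tTil t δ) a b p)
    (x : Fin d → ℤ) :
    ∃ L : ℝ, ∀ a : V × (Fin d → ℤ),
      Filter.Tendsto
        (fun n : ℕ => (graphDist (sTil s δ) (tTil t δ) a (a.1, a.2 + n • x) : ℝ) / n)
        Filter.atTop (nhds L) :=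
  stmt13_general s t δ hconn x
end

section
/- Every rational polytope is a velocity polytope: for every nonempty finite set W ⊆ ℚ^d, there exists a displacement graph (G, δ) in dimension d which is strongly connected and whose velocity polytope (the convex hull in ℝ^d of its basic velocities) equals the convex hull in ℝ^d of W. -/
/-- Regard a vector of `ℚ^d` as a point of Euclidean space `ℝ^d`. -/
def toRQ {d : ℕ} (x : Fin d → ℚ) : EuclideanSpace ℝ (Fin d) := WithLp.toLp 2 (fun i => (x i : ℝ))

/-! Clear denominators: pick `N ≥ 1` with `N • w ∈ ℤ^d` for every `w ∈ W`. Take the ring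
`0 → 1 → ⋯ → N - 1 → 0` in which the step `0 → 1` is split into one parallel edge per `w ∈ W`,
carrying displacement `N • w`, all other edges carrying `0`. Every edge raises the vertex by `1`
modulo `N`, so a cycle has length exactly `N` and leaves `0` exactly once: its basic velocity is
`N • w / N = w` for one `w`, and every `w` arises from some cycle. The basic velocities are thus
exactly the points of `W`, and the ring is strongly connected. -/

theorem exists_pos_nat_mul_eq_intCast {ι : Type*} [Fintype ι] (q : ι → ℚ) :
    ∃ N : ℕ, 0 < N ∧ ∃ z : ι → ℤ, ∀ i, (z i : ℚ) = N * q i := by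
  refine ⟨∏ i, (q i).den, Finset.prod_pos fun i _ => (q i).pos, ?_⟩
  have hdvd i : (q i).den ∣ ∏ i, (q i).den := Finset.dvd_prod_of_mem _ (Finset.mem_univ i)
  choose k hk using hdvd
  refine ⟨fun i => k i * (q i).num, fun i => ?_⟩
  rw [hk i]
  push_cast
  rw [← Rat.mul_den_eq_num]
  ring

theorem inv_smul_toR_eq_toRQ {d N : ℕ} (hN : N ≠ 0) {z : Fin d → ℤ} {q : Fin d → ℚ}
    (h : ∀ i, (z i : ℚ) = N * q i) : (N : ℝ)⁻¹ • toR z = toRQ q := by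
  ext i
  have hi : (z i : ℝ) = N * q i := by exact_mod_cast h i
  simp only [toR, toRQ, PiLp.smul_apply, smul_eq_mul, hi]
  field_simp

section SuccessorGraph

open Fin.NatCast

variable {n : ℕ} {E : Type*} {s t : E → Fin (n + 1)}

theorem src_getElem_eq_add (ht : ∀ e, t e = s e + 1) {l : List E}
    (hl : l.IsChain (fun e f => t e = s f)) (i : ℕ) (hi : i < l.length) :
    s l[i] = s l[0] + (i : Fin (n + 1)) := by
  induction i with
  | zero => simp
  | succ i ih =>
    rw [← List.isChain_iff_getElem.mp hl i hi, ht, ih, Nat.cast_add_one, add_assoc]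

theorem IsCycleList.length_eq (ht : ∀ e, t e = s e + 1) {l : List E}
    (hl : IsCycleList s t l) : l.length = n + 1 := by
  obtain ⟨hne, hchain, hclose, hnodup⟩ := hl
  have hpos : 0 < l.length := List.length_pos_iff.mpr hne
  have hle : l.length ≤ n + 1 := by simpa using hnodup.length_le_card
  have hstep : ((l.length - 1 : ℕ) : Fin (n + 1)) + 1 = l.length := by
    rw [← Nat.cast_add_one, Nat.sub_add_cancel hpos]
  rw [List.head_eq_getElem, List.getLast_eq_getElem, ht,
    src_getElem_eq_add ht hchain (l.length - 1), add_assoc, hstep] at hclose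
  have hdvd : n + 1 ∣ l.length := by simpa using hclose
  exact le_antisymm hle (Nat.le_of_dvd hpos hdvd)

theorem IsCycleList.exists_sum_map_eq {M : Type*} [AddCommMonoid M] (ht : ∀ e, t e = s e + 1)
    {δ : E → M} (hδ : ∀ e, s e ≠ 0 → δ e = 0) {l : List E} (hl : IsCycleList s t l) :
    ∃ e, s e = 0 ∧ (l.map δ).sum = δ e := by
  classical
  -- `l` visits all `n + 1` vertices once each, so exactly one of its edges leaves `0`.
  have hnodup : (l.map s).Nodup := hl.2.2.2
  have hall : (l.map s).toFinset = Finset.univ := by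
    apply Finset.eq_univ_of_card
    rw [List.toFinset_card_of_nodup hnodup, List.length_map, hl.length_eq ht, Fintype.card_fin]
  obtain ⟨e₀, he₀, hs₀⟩ := List.mem_map.mp (List.mem_toFinset.mp (hall ▸ Finset.mem_univ 0))
  refine ⟨e₀, hs₀, ?_⟩
  rw [← List.sum_toFinset δ (hnodup.of_map s)]
  refine Finset.sum_eq_single_of_mem e₀ (List.mem_toFinset.mpr he₀) fun e he hne => hδ e ?_
  intro hs
  exact hne (List.inj_on_of_nodup_map hnodup (List.mem_toFinset.mp he) he₀ (hs.trans hs₀.symm))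

theorem isCycleList_of_map_eq_finRange (ht : ∀ e, t e = s e + 1) {l : List E}
    (hl : l.map s = List.finRange (n + 1)) : IsCycleList s t l := by
  have hne : l ≠ [] := by
    rintro rfl
    simp at hl
  refine ⟨hne, ?_, ?_, ?_⟩
  · have hsucc : (l.map s).IsChain (fun a b => a + 1 = b) := by
      rw [hl, List.isChain_iff_getElem]
      intro i hi
      simp only [List.length_finRange] at hi
      ext
      simp [Fin.val_add, Nat.mod_eq_of_lt hi]
    exact ((List.isChain_map s).mp hsucc).imp fun e f h => (ht e).trans h
  · have hhead := List.head_map (f := s) (l := l) (by simpa using hne)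
    have hlast := List.getLast_map (f := s) (l := l) (by simpa using hne)
    simp only [hl] at hhead hlast
    rw [ht, ← hhead, ← hlast]
    simp only [List.head_eq_getElem, List.getLast_eq_getElem, List.getElem_finRange,
      List.length_finRange]
    exact (Fin.last_add_one n).symm
  · rw [hl]
    exact List.nodup_finRange _

theorem exists_pathFrom_add (ht : ∀ e, t e = s e + 1) (hout : ∀ v, ∃ e, s e = v) (k : ℕ)
    (v : Fin (n + 1)) : ∃ p, PathFrom s t v (v + (k + 1 : ℕ)) p := by
  induction k generalizing v with
  | zero =>
    obtain ⟨e, he⟩ := hout v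
    exact ⟨[e], List.cons_ne_nil e [], List.isChain_singleton e, he, by simp [ht, he]⟩
  | succ k ih =>
    obtain ⟨e, he⟩ := hout v
    obtain ⟨p, hne, hchain, hhead, hlast⟩ := ih (v + 1)
    refine ⟨e :: p, List.cons_ne_nil e p, ?_, he, ?_⟩
    · exact List.isChain_cons.mpr ⟨fun f hf => by simp_all [List.head?_eq_some_head hne], hchain⟩
    · rw [List.getLast_cons hne, hlast]
      push_cast
      abel

theorem stronglyConnected_of_forall_exists_src (ht : ∀ e, t e = s e + 1)
    (hout : ∀ v, ∃ e, s e = v) : StronglyConnected s t := by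
  intro v w
  simpa using exists_pathFrom_add ht hout (w - v - 1).val v

end SuccessorGraph

section RingGraph

variable {d K M : ℕ}

def ringSrc (K M : ℕ) : Fin (K + M) → Fin (M + 1) :=
  Fin.addCases (fun _ => 0) Fin.succ

def ringDisp (M : ℕ) (z : Fin K → Fin d → ℤ) : Fin (K + M) → Fin d → ℤ :=
  Fin.addCases z (fun _ => 0)

def ringCycle (M : ℕ) (j : Fin K) : List (Fin (K + M)) :=
  Fin.castAdd M j :: (List.finRange M).map (Fin.natAdd K)

theorem ringDisp_eq_zero_of_ringSrc_ne_zero (z : Fin K → Fin d → ℤ) (e : Fin (K + M))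
    (he : ringSrc K M e ≠ 0) : ringDisp M z e = 0 := by
  induction e using Fin.addCases with
  | left j => simp [ringSrc] at he
  | right i => simp [ringDisp]

theorem exists_ringDisp_eq_of_ringSrc_eq_zero (z : Fin K → Fin d → ℤ) (e : Fin (K + M))
    (he : ringSrc K M e = 0) : ∃ j, ringDisp M z e = z j := by
  induction e using Fin.addCases with
  | left j => exact ⟨j, by simp [ringDisp]⟩
  | right i => simp [ringSrc] at he

theorem map_ringSrc_ringCycle (j : Fin K) :
    (ringCycle M j).map (ringSrc K M) = List.finRange (M + 1) := by
  simp [ringCycle, ringSrc, List.finRange_succ, Function.comp_def]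

theorem sum_map_ringDisp_ringCycle (z : Fin K → Fin d → ℤ) (j : Fin K) :
    ((ringCycle M j).map (ringDisp M z)).sum = z j := by
  simp [ringCycle, ringDisp, Function.comp_def]

theorem stronglyConnected_ringGraph (j : Fin K) :
    StronglyConnected (ringSrc K M) (ringSrc K M · + 1) := by
  refine stronglyConnected_of_forall_exists_src (fun _ => rfl) fun v => ?_
  obtain ⟨e, -, he⟩ := List.mem_map.mp (map_ringSrc_ringCycle (M := M) j ▸ List.mem_finRange v)
  exact ⟨e, he⟩

theorem basicVelocities_ringGraph (z : Fin K → Fin d → ℤ) :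
    basicVelocities (ringSrc K M) (ringSrc K M · + 1) (ringDisp M z) =
      Set.range fun j => ((M + 1 : ℕ) : ℝ)⁻¹ • toR (z j) := by
  ext u
  constructor
  · rintro ⟨l, hl, rfl⟩
    obtain ⟨e, he, hsum⟩ :=
      hl.exists_sum_map_eq (fun _ => rfl) (ringDisp_eq_zero_of_ringSrc_ne_zero z)
    obtain ⟨j, hj⟩ := exists_ringDisp_eq_of_ringSrc_eq_zero z e he
    exact ⟨j, by rw [hl.length_eq (fun _ => rfl), hsum, hj]⟩
  · rintro ⟨j, rfl⟩
    refine ⟨ringCycle M j,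
      isCycleList_of_map_eq_finRange (fun _ => rfl) (map_ringSrc_ringCycle j), ?_⟩
    rw [sum_map_ringDisp_ringCycle, ringCycle, List.length_cons, List.length_map,
      List.length_finRange]

end RingGraph

theorem stmt15_general {d : ℕ}
    (W : Set (Fin d → ℚ)) (hWfin : W.Finite) (hWne : W.Nonempty) :
    ∃ (n m : ℕ) (_ : 0 < n) (s t : Fin m → Fin n) (δ : Fin m → Fin d → ℤ),
      StronglyConnected s t ∧
      convexHull ℝ (basicVelocities s t δ) = convexHull ℝ (toRQ '' W) := by
  obtain ⟨K, w, rfl⟩ := hWfin.fin_embedding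
  obtain ⟨-, j₀, -⟩ := hWne
  obtain ⟨N, hN, z, hz⟩ := exists_pos_nat_mul_eq_intCast fun p : Fin K × Fin d => w p.1 p.2
  obtain ⟨M, rfl⟩ := Nat.exists_eq_add_one_of_ne_zero hN.ne'
  refine ⟨M + 1, K + M, M.succ_pos, ringSrc K M, (ringSrc K M · + 1),
    ringDisp M fun j i => z (j, i), stronglyConnected_ringGraph j₀, ?_⟩
  rw [basicVelocities_ringGraph, ← Set.range_comp]
  congr 2
  ext1 j
  exact inv_smul_toR_eq_toRQ hN.ne' fun i => hz (j, i)

/-- Every rational polytope is a velocity polytope: for every nonempty finite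
set `W ⊆ ℚ^d` there is a strongly connected displacement graph in dimension `d`
whose velocity polytope equals the convex hull of `W`. -/
theorem stmt15 {d : ℕ} (hd : 1 ≤ d)
    (W : Set (Fin d → ℚ)) (hWfin : W.Finite) (hWne : W.Nonempty) :
    ∃ (n m : ℕ) (_ : 0 < n) (s t : Fin m → Fin n) (δ : Fin m → Fin d → ℤ),
      StronglyConnected s t ∧
      convexHull ℝ (basicVelocities s t δ) = convexHull ℝ (toRQ '' W) :=
  stmt15_general W hWfin hWne
end
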